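/- For every even positive integer k and every g ≥ 0, with x = ⌊4g/(15k)⌋, the following change-of-variables identity holds: Σ_{f ∈ A⁺_{≤g}} Σ over (k−1)-tuples (n₁,…,n_{k−1}) with each n_j ∈ A⁺_{≤x} and f·n₁⋯n_{k−1} a perfect square of 1/√(|f||n₁|⋯|n_{k−1}|) = Σ over (k−1)-tuples (n₁,…,n_{k−1}) with each n_j ∈ A⁺_{≤x}, writing n₁⋯n_{k−1} = r·h² with r monic squarefree and h monic, of (1/(|r||h|)) · Σ_{l ∈ A⁺_{≤⌊(g − deg r)/2⌋}} 1/|l|. -/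
import Mathlib


open Polynomial Finset
open scoped BigOperators Classical

noncomputable section

/-- The finite set of monic polynomials of degree exactly `n` over the finite field `Fq`,
realized as the image of coefficient tuples. -/
def monicDeg (Fq : Type) [Field Fq] [Fintype Fq] (n : ℕ) : Finset (Polynomial Fq) :=
  (Finset.univ : Finset (Fin n → Fq)).image
    (fun c => X ^ n + ∑ i : Fin n, C (c i) * X ^ (i : ℕ))

/-- Monic polynomials of degree at most `n` (the set `A⁺_{≤ n}`). -/
def monicLE (Fq : Type) [Field Fq] [Fintype Fq] (n : ℕ) : Finset (Polynomial Fq) :=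
  (Finset.range (n + 1)).biUnion (monicDeg Fq)

/-- Monic irreducible polynomials of degree `n` (the set `𝒫_n`). -/
def primesDeg (Fq : Type) [Field Fq] [Fintype Fq] (n : ℕ) : Finset (Polynomial Fq) :=
  (monicDeg Fq n).filter (fun P => Irreducible P)

/-- The quadratic character `χ_P`: it is `0` if `P ∣ f`, `1` if `P ∤ f` and `f` is a
(nonzero) square modulo `P`, and `-1` otherwise. -/
def chi {Fq : Type} [Field Fq] [Fintype Fq] (P f : Polynomial Fq) : ℤ :=
  if P ∣ f then 0 else if ∃ g : Polynomial Fq, P ∣ (g ^ 2 - f) then 1 else -1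

/-- The norm `|f| = q^(deg f)` for `f ≠ 0`, and `|0| = 0`. -/
def pnorm {Fq : Type} [Field Fq] [Fintype Fq] (f : Polynomial Fq) : ℝ :=
  if f = 0 then 0 else (Fintype.card Fq : ℝ) ^ f.natDegree

/-- The central `L`-value `L(1/2, χ_P) = ∑_{n=0}^{2g} q^{-n/2} ∑_{f ∈ A⁺_n} χ_P(f)`,
for `P` of degree `2g+1`. -/
def Lhalf {Fq : Type} [Field Fq] [Fintype Fq] (g : ℕ) (P : Polynomial Fq) : ℝ :=
  ∑ n ∈ Finset.range (2 * g + 1),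
    (Real.sqrt (Fintype.card Fq) ^ n)⁻¹ * ∑ f ∈ monicDeg Fq n, (chi P f : ℝ)

/-- The short Dirichlet polynomial `A(P) = ∑_{n ∈ A⁺_{≤x}} χ_P(n)/√|n|`. -/
def AP {Fq : Type} [Field Fq] [Fintype Fq] (x : ℕ) (P : Polynomial Fq) : ℝ :=
  ∑ n ∈ monicLE Fq x, (chi P n : ℝ) / Real.sqrt (pnorm n)

/-- `d_k(m)`: the number of `k`-tuples of monic polynomials whose product is `m`. -/
def dk {Fq : Type} [Field Fq] [Fintype Fq] (k : ℕ) (m : Polynomial Fq) : ℕ :=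
  Nat.card {t : Fin k → Polynomial Fq // (∀ i, (t i).Monic) ∧ ∏ i, t i = m}

variable {Fq : Type} [Field Fq] [Fintype Fq]

lemma mem_monicDeg {n : ℕ} {p : Polynomial Fq} :
    p ∈ monicDeg Fq n ↔ p.Monic ∧ p.natDegree = n := by
  constructor
  · intro hp
    simp only [monicDeg, mem_image, mem_univ, true_and] at hp
    obtain ⟨c, rfl⟩ := hp
    have hdeg : (∑ i : Fin n, C (c i) * X ^ (i : ℕ)).degree < ((n : ℕ) : WithBot ℕ) := by
      apply lt_of_le_of_lt (degree_sum_le _ _)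
      refine (Finset.sup_lt_iff (by exact_mod_cast WithBot.bot_lt_coe n)).2 ?_
      intro i _
      calc (C (c i) * X ^ (i : ℕ)).degree ≤ ((i : ℕ) : WithBot ℕ) :=
            degree_C_mul_X_pow_le (i : ℕ) (c i)
        _ < ((n : ℕ) : WithBot ℕ) := by exact_mod_cast i.2
    have hdeg' : (∑ i : Fin n, C (c i) * X ^ (i : ℕ)).degree < (X ^ n : Polynomial Fq).degree := by
      rwa [degree_X_pow]
    refine ⟨(monic_X_pow n).add_of_left hdeg', ?_⟩
    rw [natDegree_eq_of_degree_eq (degree_add_eq_left_of_degree_lt hdeg'), natDegree_X_pow]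
  · rintro ⟨hm, rfl⟩
    simp only [monicDeg, mem_image, mem_univ, true_and]
    refine ⟨fun i => p.coeff i, ?_⟩
    ext m
    rcases lt_trichotomy m p.natDegree with hlt | heq | hgt
    · rw [coeff_add, coeff_X_pow, if_neg hlt.ne, zero_add, finset_sum_coeff]
      rw [Finset.sum_eq_single (⟨m, hlt⟩ : Fin p.natDegree)]
      · simp
      · intro i _ hi
        rw [coeff_C_mul, coeff_X_pow, if_neg, mul_zero]
        intro hmi
        exact hi (by ext; simpa using hmi.symm)
      · simp
    · subst heq
      rw [coeff_add, coeff_X_pow, if_pos rfl, finset_sum_coeff]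
      rw [Finset.sum_eq_zero, add_zero, hm.coeff_natDegree]
      intro i _
      rw [coeff_C_mul, coeff_X_pow, if_neg (by exact_mod_cast i.2.ne'), mul_zero]
    · rw [coeff_add, coeff_X_pow, if_neg hgt.ne', finset_sum_coeff,
        Finset.sum_eq_zero, add_zero, coeff_eq_zero_of_natDegree_lt hgt]
      intro i _
      rw [coeff_C_mul, coeff_X_pow, if_neg (by omega), mul_zero]

lemma mem_monicLE {n : ℕ} {p : Polynomial Fq} :
    p ∈ monicLE Fq n ↔ p.Monic ∧ p.natDegree ≤ n := by
  simp only [monicLE, mem_biUnion, mem_range, Nat.lt_succ_iff, mem_monicDeg]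
  constructor
  · rintro ⟨a, ha, hm, rfl⟩; exact ⟨hm, ha⟩
  · rintro ⟨hm, hle⟩; exact ⟨p.natDegree, hle, hm, rfl⟩

lemma pnorm_pos {p : Polynomial Fq} (hp : p ≠ 0) : 0 < pnorm p := by
  rw [pnorm, if_neg hp]
  exact pow_pos (by exact_mod_cast Fintype.card_pos) _

lemma pnorm_mul {p q : Polynomial Fq} (hp : p ≠ 0) (hq : q ≠ 0) :
    pnorm (p * q) = pnorm p * pnorm q := by
  rw [pnorm, pnorm, pnorm, if_neg hp, if_neg hq, if_neg (mul_ne_zero hp hq),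
    natDegree_mul hp hq, pow_add]

lemma pnorm_prod {ι : Type*} [Fintype ι] {t : ι → Polynomial Fq} (ht : ∀ i, t i ≠ 0) :
    ∏ i, pnorm (t i) = pnorm (∏ i, t i) := by
  rw [pnorm, if_neg (Finset.prod_ne_zero_iff.2 fun i _ => ht i),
    natDegree_prod _ _ (fun i _ => ht i)]
  rw [← Finset.prod_pow_eq_pow_sum]
  exact Finset.prod_congr rfl fun i _ => by rw [pnorm, if_neg (ht i)]

/-- key square characterization -/
lemma key_square {r h f : Polynomial Fq} (hr : r.Monic) (hsf : Squarefree r)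
    (hh : h.Monic) (hf : f.Monic) :
    IsSquare (f * (r * h ^ 2)) ↔ ∃ l : Polynomial Fq, l.Monic ∧ f = r * l ^ 2 := by
  constructor
  · rintro ⟨s, hs⟩
    have hr0 := hr.ne_zero
    have hh0 := hh.ne_zero
    have hf0 := hf.ne_zero
    have hs2 : f * r * h ^ 2 = s ^ 2 := by linear_combination hs
    have hhs : h ∣ s := by
      have hd : h ^ 2 ∣ s ^ 2 := ⟨f * r, by linear_combination -hs2⟩
      exact (IsIntegrallyClosed.pow_dvd_pow_iff two_ne_zero).mp hd
    obtain ⟨u, rfl⟩ := hhs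
    have hu2 : f * r = u ^ 2 :=
      mul_right_cancel₀ (pow_ne_zero 2 hh0) (by linear_combination hs2)
    have hru : r ∣ u :=
      (hsf.dvd_pow_iff_dvd two_ne_zero).1 ⟨f, by linear_combination -hu2⟩
    obtain ⟨v, rfl⟩ := hru
    have hv0 : v ≠ 0 := by
      rintro rfl
      simp only [mul_zero, ne_eq, zero_pow, OfNat.ofNat_ne_zero, not_false_iff] at hu2
      exact (mul_ne_zero hf0 hr0) hu2
    have hfv : f = r * v ^ 2 := by
      have hrr : r * f = r * (r * v ^ 2) := by linear_combination hu2
      exact mul_left_cancel₀ hr0 hrr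
    have hlc : v.leadingCoeff ^ 2 = 1 := by
      have := congrArg leadingCoeff hfv
      rw [hf.leadingCoeff, leadingCoeff_mul, hr.leadingCoeff, one_mul, leadingCoeff_pow] at this
      exact this.symm
    refine ⟨v * C v.leadingCoeff⁻¹, monic_mul_leadingCoeff_inv hv0, ?_⟩
    have hC : (C v.leadingCoeff⁻¹ : Polynomial Fq) ^ 2 = 1 := by
      rw [← map_pow, inv_pow, hlc, inv_one, map_one]
    rw [mul_pow, hC, mul_one]
    exact hfv
  · rintro ⟨l, hl, rfl⟩
    exact ⟨r * l * h, by ring⟩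

lemma sq_monic_inj {a b : Polynomial Fq} (ha : a.Monic) (hb : b.Monic)
    (hab : a ^ 2 = b ^ 2) : a = b := by
  have : (a - b) * (a + b) = 0 := by linear_combination hab
  rcases mul_eq_zero.1 this with h1 | h1
  · linear_combination h1
  · have hab' : a = -b := by linear_combination h1
    have : (1 : Fq) = -1 := by
      have := congrArg leadingCoeff hab'
      rwa [ha.leadingCoeff, leadingCoeff_neg, hb.leadingCoeff] at this
    calc a = -b := hab'
      _ = C (-1 : Fq) * b := by simp
      _ = C (1 : Fq) * b := by rw [← this]
      _ = b := by simp

/-- for every even positive `k` and `g ≥ 0`, with `x = ⌊4g/(15k)⌋`, writing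
(for each `(k−1)`-tuple `t` of monic polynomials of degree `≤ x`) `n₁⋯n_{k−1} = r(t)·h(t)²`
with `r(t)` monic squarefree and `h(t)` monic, one has
`∑_{f ∈ A⁺_{≤g}} ∑_{t, f·n₁⋯n_{k−1} = □} 1/√(|f||n₁|⋯|n_{k−1}|)
  = ∑_t (1/(|r(t)||h(t)|)) ∑_{l ∈ A⁺_{≤⌊(g−deg r(t))/2⌋}} 1/|l|`. -/
theorem statement14 {Fq : Type} [Field Fq] [Fintype Fq] (hq : Fintype.card Fq % 4 = 1)
    (k : ℕ) (hk0 : 0 < k) (hk : Even k) (g : ℕ)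
    (r h : (Fin (k - 1) → Polynomial Fq) → Polynomial Fq)
    (hrh : ∀ t ∈ (Fintype.piFinset fun _ : Fin (k - 1) => monicLE Fq (4 * g / (15 * k))),
      (r t).Monic ∧ Squarefree (r t) ∧ (h t).Monic ∧ ∏ i, t i = r t * h t ^ 2) :
    (∑ f ∈ monicLE Fq g,
        ∑ t ∈ (Fintype.piFinset fun _ : Fin (k - 1) =>
              monicLE Fq (4 * g / (15 * k))).filter
            (fun t => IsSquare (f * ∏ i, t i)),
          (Real.sqrt (pnorm f * ∏ i, pnorm (t i)))⁻¹) =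
      ∑ t ∈ Fintype.piFinset fun _ : Fin (k - 1) => monicLE Fq (4 * g / (15 * k)),
        (pnorm (r t) * pnorm (h t))⁻¹ *
          ∑ l ∈ monicLE Fq ((g - (r t).natDegree) / 2), (pnorm l)⁻¹ := by
  set x := 4 * g / (15 * k) with hx
  set S := Fintype.piFinset fun _ : Fin (k - 1) => monicLE Fq x with hS
  have swap : (∑ f ∈ monicLE Fq g,
        ∑ t ∈ S.filter (fun t => IsSquare (f * ∏ i, t i)),
          (Real.sqrt (pnorm f * ∏ i, pnorm (t i)))⁻¹) =
      ∑ t ∈ S, ∑ f ∈ (monicLE Fq g).filter (fun f => IsSquare (f * ∏ i, t i)),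
          (Real.sqrt (pnorm f * ∏ i, pnorm (t i)))⁻¹ := by
    simp_rw [Finset.sum_filter]
    exact Finset.sum_comm
  rw [swap]
  refine Finset.sum_congr rfl fun t ht => ?_
  obtain ⟨hrM, hrS, hhM, hprod⟩ := hrh t ht
  have htmem : ∀ i, (t i).Monic ∧ (t i).natDegree ≤ x := fun i =>
    mem_monicLE.1 (Fintype.mem_piFinset.1 ht i)
  have ht0 : ∀ i, t i ≠ 0 := fun i => (htmem i).1.ne_zero
  set R := (r t).natDegree with hR
  -- R ≤ g
  have hRg : R ≤ g := by
    have h1 : R ≤ (∏ i, t i).natDegree := by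
      rw [hprod, natDegree_mul hrM.ne_zero (pow_ne_zero 2 hhM.ne_zero)]
      exact Nat.le_add_right _ _
    have hdegsum : (∏ i, t i).natDegree ≤ (k - 1) * x := by
      rw [natDegree_prod _ _ (fun i _ => ht0 i)]
      calc ∑ i, (t i).natDegree ≤ ∑ _i : Fin (k - 1), x :=
            Finset.sum_le_sum fun i _ => (htmem i).2
        _ = (k - 1) * x := by simp [Finset.sum_const, mul_comm]
    have h2 : x * (15 * k) ≤ 4 * g := Nat.div_mul_le_self (4 * g) (15 * k)
    have h3 : (k - 1) * x ≤ k * x := Nat.mul_le_mul_right x (Nat.sub_le k 1)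
    have h4 : 15 * (k * x) ≤ 4 * g := by calc 15 * (k * x) = x * (15 * k) := by ring
      _ ≤ 4 * g := h2
    have h5 : k * x ≤ g := by linarith
    exact le_trans h1 (le_trans hdegsum (le_trans h3 h5))
  have hsum : (∑ f ∈ (monicLE Fq g).filter (fun f => IsSquare (f * ∏ i, t i)),
        (Real.sqrt (pnorm f * ∏ i, pnorm (t i)))⁻¹)
      = ∑ l ∈ monicLE Fq ((g - R) / 2),
          (pnorm (r t) * pnorm (h t))⁻¹ * (pnorm l)⁻¹ := by
    refine (Finset.sum_bij (fun l _ => r t * l ^ 2) ?_ ?_ ?_ ?_).symm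
    · -- maps into
      intro l hl
      obtain ⟨hlM, hld⟩ := mem_monicLE.1 hl
      rw [Finset.mem_filter, mem_monicLE]
      have hdeg : (r t * l ^ 2).natDegree = R + 2 * l.natDegree := by
        rw [natDegree_mul hrM.ne_zero (pow_ne_zero 2 hlM.ne_zero), natDegree_pow]
      refine ⟨⟨hrM.mul (hlM.pow 2), ?_⟩, ?_⟩
      · rw [hdeg]; omega
      · rw [hprod]
        exact ⟨r t * l * h t, by ring⟩
    · -- injective
      intro l1 hl1 l2 hl2 heq
      have h1 := mul_left_cancel₀ hrM.ne_zero heq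
      exact sq_monic_inj (mem_monicLE.1 hl1).1 (mem_monicLE.1 hl2).1 h1
    · -- surjective
      intro f hf
      rw [Finset.mem_filter, mem_monicLE] at hf
      obtain ⟨⟨hfM, hfd⟩, hfs⟩ := hf
      rw [hprod] at hfs
      obtain ⟨l, hlM, hfeq⟩ := (key_square hrM hrS hhM hfM).1 hfs
      have hdeg : f.natDegree = R + 2 * l.natDegree := by
        rw [hfeq, natDegree_mul hrM.ne_zero (pow_ne_zero 2 hlM.ne_zero), natDegree_pow]
      refine ⟨l, mem_monicLE.2 ⟨hlM, by omega⟩, hfeq.symm⟩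
    · -- values agree
      intro l hl
      obtain ⟨hlM, _⟩ := mem_monicLE.1 hl
      have hl0 := hlM.ne_zero
      have hP : pnorm (r t * l ^ 2) * ∏ i, pnorm (t i)
          = (pnorm (r t) * pnorm l * pnorm (h t)) ^ 2 := by
        rw [pnorm_prod ht0, ← pnorm_mul (mul_ne_zero hrM.ne_zero (pow_ne_zero 2 hl0))
          (Finset.prod_ne_zero_iff.2 fun i _ => ht0 i), hprod]
        have : r t * l ^ 2 * (r t * h t ^ 2) = (r t * l * h t) * (r t * l * h t) := by ring
        rw [this, pnorm_mul (by exact mul_ne_zero (mul_ne_zero hrM.ne_zero hl0) hhM.ne_zero)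
          (by exact mul_ne_zero (mul_ne_zero hrM.ne_zero hl0) hhM.ne_zero),
          pnorm_mul (mul_ne_zero hrM.ne_zero hl0) hhM.ne_zero,
          pnorm_mul hrM.ne_zero hl0]
        ring
      rw [hP, Real.sqrt_sq (le_of_lt (mul_pos (mul_pos (pnorm_pos hrM.ne_zero) (pnorm_pos hl0)) (pnorm_pos hhM.ne_zero)))]
      rw [mul_inv, mul_inv, mul_inv]
      ring
  rw [hsum, ← Finset.mul_sum]
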